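/- arXiv:2504.07038 — 3 statements merged into one kernel-verified Lean document; each statement's English description precedes it below -/
import Mathlib

section
/- Weak regularity lemma (Lemma 5.1 of the paper, after Tao): Let H be a real or complex Hilbert space and S a set of vectors of H each of norm at most 1. Then for every f ∈ H with ‖f‖_H ≤ 1 and every 0 < ε ≤ 1 there is a decomposition f = f_str + f_psd such that f_str is (⌈1/ε²⌉, 1/ε)-structured with respect to S, f_psd is ε-pseudorandom with respect to S, and ‖f_psd‖_H ≤ ‖f‖_H. -/
open scoped BigOperators

/-- A vector `f` in a Hilbert space is `(M, K)`-structured with respect to a set `S`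
of structured vectors if it is a linear combination of at most `M` vectors of `S`
with scalar coefficients of norm at most `K`. -/
def IsStructured {𝕜 H : Type*} [RCLike 𝕜] [NormedAddCommGroup H] [InnerProductSpace 𝕜 H]
    (S : Set H) (M : ℕ) (K : ℝ) (f : H) : Prop :=
  ∃ (M' : ℕ) (c : Fin M' → 𝕜) (v : Fin M' → H),
    M' ≤ M ∧ (∀ i, v i ∈ S) ∧ (∀ i, ‖c i‖ ≤ K) ∧ f = ∑ i, c i • v i

/-- A vector `f` is `ε`-pseudorandom with respect to `S` if `|⟨f, v⟩| ≤ ε` for all `v ∈ S`. -/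
def IsPseudorandom {𝕜 H : Type*} [RCLike 𝕜] [NormedAddCommGroup H] [InnerProductSpace 𝕜 H]
    (S : Set H) (ε : ℝ) (f : H) : Prop :=
  ∀ v ∈ S, ‖(inner 𝕜 f v : 𝕜)‖ ≤ ε

/-!
Energy increment. If `g` is not `ε`-pseudorandom, some `v ∈ S` has `‖⟪g, v⟫‖ > ε`; subtracting
the orthogonal projection of `g` onto `v` lowers `‖g‖²` by at least `ε²` and costs one term
`c • v` with `‖c‖ ≤ ‖g‖² / ε ≤ 1 / ε`. Starting from `‖f‖² ≤ 1`, this can happen at most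
`⌈1 / ε²⌉` times before the remainder is pseudorandom.
-/

open scoped InnerProductSpace

section

variable {𝕜 H : Type*} [RCLike 𝕜] [NormedAddCommGroup H] [InnerProductSpace 𝕜 H]

theorem norm_sub_starProjection_singleton_sq (v g : H) :
    ‖g - (𝕜 ∙ v).starProjection g‖ ^ 2 = ‖g‖ ^ 2 - ‖⟪v, g⟫_𝕜‖ ^ 2 / ‖v‖ ^ 2 := by
  have hP : ‖(𝕜 ∙ v).starProjection g‖ ^ 2 = ‖⟪v, g⟫_𝕜‖ ^ 2 / ‖v‖ ^ 2 := by
    rcases eq_or_ne v 0 with rfl | hv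
    · simp
    · rw [Submodule.starProjection_singleton, norm_smul, norm_div, RCLike.norm_ofReal,
        abs_of_nonneg (by positivity)]
      field_simp [norm_ne_zero_iff.mpr hv]
  have h := (𝕜 ∙ v).norm_sq_eq_add_norm_sq_starProjection g
  rw [Submodule.starProjection_orthogonal_val] at h
  linarith

theorem exists_norm_sub_smul_sq_le {ε : ℝ} {v g : H} (hv : ‖v‖ ≤ 1) (hε : 0 < ε)
    (hgv : ε < ‖⟪g, v⟫_𝕜‖) :
    ∃ c : 𝕜, ‖c‖ ≤ ‖g‖ ^ 2 / ε ∧ ‖g - c • v‖ ^ 2 ≤ ‖g‖ ^ 2 - ε ^ 2 := by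
  rw [← norm_inner_symm] at hgv
  have hcs : ‖⟪v, g⟫_𝕜‖ ≤ ‖v‖ * ‖g‖ := norm_inner_le_norm v g
  have hv0 : 0 < ‖v‖ := by
    by_contra! h
    nlinarith [norm_nonneg v, norm_nonneg g]
  refine ⟨⟪v, g⟫_𝕜 / ((‖v‖ ^ 2 : ℝ) : 𝕜), ?_, ?_⟩
  · rw [norm_div, RCLike.norm_ofReal, abs_of_nonneg (by positivity),
      div_le_div_iff₀ (by positivity) hε]
    nlinarith [mul_self_le_mul_self (norm_nonneg _) hcs]
  · rw [← Submodule.starProjection_singleton, norm_sub_starProjection_singleton_sq,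
      sub_le_sub_iff_left, le_div_iff₀ (by positivity)]
    have : ‖v‖ ^ 2 ≤ 1 := pow_le_one₀ (norm_nonneg v) hv
    nlinarith [mul_le_mul_of_nonneg_left this (sq_nonneg ε)]

theorem IsStructured.zero (S : Set H) (M : ℕ) (K : ℝ) : IsStructured (𝕜 := 𝕜) S M K 0 :=
  ⟨0, ![], ![], M.zero_le, nofun, nofun, by simp⟩

theorem IsStructured.smul_add {S : Set H} {M : ℕ} {K : ℝ} {f v : H} {c : 𝕜} (hv : v ∈ S)
    (hc : ‖c‖ ≤ K) (hf : IsStructured (𝕜 := 𝕜) S M K f) :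
    IsStructured (𝕜 := 𝕜) S (M + 1) K (c • v + f) := by
  obtain ⟨M', c', v', hM', hv', hc', rfl⟩ := hf
  refine ⟨M' + 1, Fin.cons c c', Fin.cons v v', by omega, Fin.cases hv hv',
    Fin.cases hc hc', ?_⟩
  simp [Fin.sum_univ_succ]

theorem IsPseudorandom.of_norm_le {S : Set H} (hS : ∀ v ∈ S, ‖v‖ ≤ 1) {ε : ℝ} {f : H}
    (hf : ‖f‖ ≤ ε) : IsPseudorandom (𝕜 := 𝕜) S ε f := fun v hv =>
  calc ‖⟪f, v⟫_𝕜‖ ≤ ‖f‖ * ‖v‖ := norm_inner_le_norm f v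
    _ ≤ ‖f‖ * 1 := by gcongr; exact hS v hv
    _ ≤ ε := by linarith

theorem exists_structured_add_pseudorandom_of_norm_sq_le {S : Set H} (hS : ∀ v ∈ S, ‖v‖ ≤ 1)
    {ε : ℝ} (hε : 0 < ε) (n : ℕ) {g : H} (hg : ‖g‖ ≤ 1) (hgn : ‖g‖ ^ 2 ≤ n * ε ^ 2) :
    ∃ fstr fpsd : H, g = fstr + fpsd ∧ IsStructured (𝕜 := 𝕜) S n (1 / ε) fstr ∧
      IsPseudorandom (𝕜 := 𝕜) S ε fpsd ∧ ‖fpsd‖ ≤ ‖g‖ := by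
  induction n generalizing g with
  | zero =>
    have hg0 : ‖g‖ = 0 := by simpa using hgn
    exact ⟨0, g, (zero_add g).symm, .zero S 0 _,
      .of_norm_le hS (hg0.trans_le hε.le), le_rfl⟩
  | succ n ih =>
    by_cases hpsd : IsPseudorandom (𝕜 := 𝕜) S ε g
    · exact ⟨0, g, (zero_add g).symm, .zero S _ _, hpsd, le_rfl⟩
    obtain ⟨v, hvS, hgv⟩ : ∃ v ∈ S, ε < ‖⟪g, v⟫_𝕜‖ := by
      simpa [IsPseudorandom] using hpsd
    obtain ⟨c, hc, hdec⟩ := exists_norm_sub_smul_sq_le (hS v hvS) hε hgv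
    have hle : ‖g - c • v‖ ≤ ‖g‖ := by nlinarith [norm_nonneg (g - c • v), norm_nonneg g]
    obtain ⟨fstr, fpsd, hsum, hstr, hpsd', hfpsd⟩ :=
      ih (hle.trans hg) (by push_cast at hgn; linarith)
    refine ⟨c • v + fstr, fpsd, ?_, IsStructured.smul_add hvS ?_ hstr, hpsd', hfpsd.trans hle⟩
    · rw [add_assoc, ← hsum, add_sub_cancel]
    · calc ‖c‖ ≤ ‖g‖ ^ 2 / ε := hc
        _ ≤ 1 / ε := by gcongr; exact pow_le_one₀ (norm_nonneg g) hg

end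

theorem weak_regularity_lemma_general {𝕜 H : Type*} [RCLike 𝕜] [NormedAddCommGroup H]
    [InnerProductSpace 𝕜 H] (S : Set H) (hS : ∀ v ∈ S, ‖v‖ ≤ 1)
    (f : H) (hf : ‖f‖ ≤ 1) (ε : ℝ) (hε0 : 0 < ε) :
    ∃ fstr fpsd : H, f = fstr + fpsd ∧
      IsStructured (𝕜 := 𝕜) S ⌈1 / ε ^ 2⌉₊ (1 / ε) fstr ∧
      IsPseudorandom (𝕜 := 𝕜) S ε fpsd ∧
      ‖fpsd‖ ≤ ‖f‖ := by
  refine exists_structured_add_pseudorandom_of_norm_sq_le hS hε0 _ hf ?_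
  calc ‖f‖ ^ 2 ≤ 1 := pow_le_one₀ (norm_nonneg f) hf
    _ = 1 / ε ^ 2 * ε ^ 2 := by field_simp
    _ ≤ ⌈1 / ε ^ 2⌉₊ * ε ^ 2 := by gcongr; exact Nat.le_ceil _

/-- Weak regularity lemma (Tao): every vector of norm at most `1` decomposes as a
`(⌈1/ε²⌉, 1/ε)`-structured part plus an `ε`-pseudorandom part of no larger norm. -/
theorem weak_regularity_lemma {𝕜 H : Type*} [RCLike 𝕜] [NormedAddCommGroup H]
    [InnerProductSpace 𝕜 H] (S : Set H) (hS : ∀ v ∈ S, ‖v‖ ≤ 1)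
    (f : H) (hf : ‖f‖ ≤ 1) (ε : ℝ) (hε0 : 0 < ε) (hε1 : ε ≤ 1) :
    ∃ fstr fpsd : H, f = fstr + fpsd ∧
      IsStructured (𝕜 := 𝕜) S ⌈1 / ε ^ 2⌉₊ (1 / ε) fstr ∧
      IsPseudorandom (𝕜 := 𝕜) S ε fpsd ∧
      ‖fpsd‖ ≤ ‖f‖ :=
  weak_regularity_lemma_general S hS f hf ε hε0
end

section
/- Cauchy–Schwarz–Gowers inequality for box norms (first part of Lemma 2.14 of the paper): Let G be a finite abelian group, ℓ ≥ 1, let H₁, …, H_ℓ be nonempty subsets of G, and for each ω ∈ {0,1}^ℓ let f_ω : G → ℂ. Then |⟨(f_ω)_{ω∈{0,1}^ℓ}⟩_{H₁,…,H_ℓ}| ≤ Π_{ω∈{0,1}^ℓ} ‖f_ω‖_{U(H₁,…,H_ℓ)}, where ⟨(f_ω)_{ω}⟩_{H₁,…,H_ℓ} = 𝔼_{x∈G} 𝔼_{h₁,h₁'∈H₁} ⋯ 𝔼_{h_ℓ,h_ℓ'∈H_ℓ} Π_{ω∈{0,1}^ℓ} 𝒞^{|ω|} f_ω(x + Σ_{i=1}^ℓ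 ω_i (h_i − h_i') + h₁' + ⋯ + h_ℓ'), 𝒞 denotes complex conjugation and |ω| = Σ_i ω_i. -/
/-!
Fix a coordinate `j`. In the summand of the box inner product the factors with `ω_j = 1`
involve `h_j` but not `h_j'`, those with `ω_j = 0` involve `h_j'` but not `h_j`, and up to
conjugation and flipping `ω_j` the two groups are the same expression. Cauchy–Schwarz in the
remaining variables therefore bounds `|⟨f⟩|²` by `|⟨f¹⟩| · |⟨f⁰⟩|`, where `fᶜ` copies the face
`ω_j = c` of the family `f` onto the whole cube. Doing this for every coordinate bounds
`|⟨f⟩|^(2^ℓ)` by the product over `θ` of the inner products of the constant families `f_θ`,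
which are the `2^ℓ`-th powers of the box norms.
-/

open scoped BigOperators

/-- `conjIter n z` applies complex conjugation `n` times to `z`, i.e. it is `𝒞^n z`. -/
def conjIter (n : ℕ) (z : ℂ) : ℂ := (starRingEnd ℂ)^[n] z

/-- The iterated multiplicative derivative
`Δ_{(h₁,h₁')}(Δ_{(h₂,h₂')}(⋯(Δ_{(h_ℓ,h_ℓ')} f)⋯))`, where
`Δ_{(h,h')} f (x) = conj (f (x + h')) * f (x + h)`. -/
def boxDeriv {G : Type*} [AddCommGroup G] : List (G × G) → (G → ℂ) → (G → ℂ)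
  | [], f => f
  | (h, h') :: rest, f => fun x =>
      (starRingEnd ℂ) (boxDeriv rest f (x + h')) * boxDeriv rest f (x + h)

/-- The average `𝔼_{x∈G} 𝔼_{h₁,h₁'∈H₁} ⋯ 𝔼_{h_ℓ,h_ℓ'∈H_ℓ}
Δ_{(h₁,h₁'),…,(h_ℓ,h_ℓ')} f (x)` defining the box norm. -/
noncomputable def boxAvg {G : Type*} [AddCommGroup G] [Fintype G]
    {ℓ : ℕ} (H : Fin ℓ → Finset G) (f : G → ℂ) : ℂ :=
  (∑ x : G, ∑ h ∈ Fintype.piFinset H, ∑ h' ∈ Fintype.piFinset H,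
      boxDeriv (List.ofFn fun i => (h i, h' i)) f x) /
    ((Fintype.card G : ℂ) * ((Fintype.piFinset H).card : ℂ) ^ 2)

/-- The box norm `‖f‖_{U(H₁,…,H_ℓ)}`, the `2^ℓ`-th root of the box average. -/
noncomputable def boxNorm {G : Type*} [AddCommGroup G] [Fintype G]
    {ℓ : ℕ} (H : Fin ℓ → Finset G) (f : G → ℂ) : ℝ :=
  (boxAvg H f).re ^ ((1 : ℝ) / 2 ^ ℓ)

/-- The Gowers box inner product `⟨(f_ω)_{ω∈{0,1}^ℓ}⟩_{H₁,…,H_ℓ}`. -/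
noncomputable def gowersBoxInner {G : Type*} [AddCommGroup G] [Fintype G]
    {ℓ : ℕ} (H : Fin ℓ → Finset G) (f : (Fin ℓ → Bool) → G → ℂ) : ℂ :=
  (∑ x : G, ∑ h ∈ Fintype.piFinset H, ∑ h' ∈ Fintype.piFinset H,
      ∏ ω : Fin ℓ → Bool,
        conjIter (Finset.univ.filter (fun i => ω i)).card
          (f ω (x + (∑ i : Fin ℓ, if ω i then h i - h' i else 0) + ∑ i : Fin ℓ, h' i))) /
    ((Fintype.card G : ℂ) * ((Fintype.piFinset H).card : ℂ) ^ 2)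

open Finset Function

theorem prod_update_true_mul_update_false {ι M : Type*} [Fintype ι] [DecidableEq ι]
    [CommMonoid M] (g : (ι → Bool) → M) (j : ι) :
    ∏ θ, g (update θ j true) * g (update θ j false) = (∏ θ, g θ) ^ 2 := by
  have hflip : Involutive fun θ : ι → Bool => update θ j (!θ j) := fun θ => by simp
  have hpair : ∀ θ, g (update θ j true) * g (update θ j false) =
      g θ * g (update θ j (!θ j)) := by
    intro θ
    have hθ : update θ j (θ j) = θ := update_eq_self j θ
    cases h : θ j <;> rw [h] at hθ <;> simp [hθ, mul_comm]
  rw [Fintype.prod_congr _ _ hpair, prod_mul_distrib, sq]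
  exact congrArg _ (Equiv.prod_comp (hflip.toPerm _) g)

theorem pow_card_le_prod_of_sq_le_mul_update {ι β : Type*} [Fintype ι] [DecidableEq ι]
    (Φ : ((ι → Bool) → β) → ℝ) (hΦ : ∀ f, 0 ≤ Φ f)
    (hsq : ∀ f j, Φ f ^ 2 ≤ Φ (fun ω => f (update ω j true)) * Φ (fun ω => f (update ω j false)))
    (f : (ι → Bool) → β) :
    Φ f ^ 2 ^ Fintype.card ι ≤ ∏ θ, Φ (fun _ => f θ) := by
  -- the coordinates in `s` are frozen to `θ`; freezing one more costs one application of `hsq`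
  have step : ∀ (s : Finset ι) j, j ∉ s → ∏ θ, Φ (fun ω => f (s.piecewise θ ω)) ≤
      ∏ θ, Φ (fun ω => f ((insert j s).piecewise θ ω)) := by
    intro s j hj
    have hpw : ∀ (θ ω : ι → Bool) c,
        s.piecewise θ (update ω j c) = (insert j s).piecewise (update θ j c) ω := by
      intro θ ω c
      ext i
      rcases eq_or_ne i j with rfl | hij
      · simp [hj]
      · by_cases hi : i ∈ s <;> simp [piecewise, hi, hij]
    refine le_of_pow_le_pow_left₀ two_ne_zero (prod_nonneg fun _ _ => hΦ _) ?_
    rw [← prod_pow, ← prod_update_true_mul_update_false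
      (fun θ => Φ fun ω => f ((insert j s).piecewise θ ω)) j]
    exact prod_le_prod (fun _ _ => sq_nonneg _) fun θ _ => by
      simpa only [hpw] using hsq (fun ω => f (s.piecewise θ ω)) j
  have hchain : ∀ s : Finset ι,
      Φ f ^ 2 ^ Fintype.card ι ≤ ∏ θ, Φ (fun ω => f (s.piecewise θ ω)) := by
    intro s
    induction s using Finset.induction_on with
    | empty => simp
    | insert j s hj ih => exact ih.trans (step s j hj)
  simpa using hchain univ

theorem le_prod_rpow_inv_card_of_pow_card_le {ι : Type*} [Fintype ι] [Nonempty ι] {x : ℝ}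
    {r : ι → ℝ} (hx : 0 ≤ x) (hr : ∀ i, 0 ≤ r i) (h : x ^ Fintype.card ι ≤ ∏ i, r i) :
    x ≤ ∏ i, r i ^ ((Fintype.card ι : ℝ)⁻¹) := by
  rw [Real.finsetProd_rpow _ _ fun i _ => hr i]
  calc x = (x ^ Fintype.card ι) ^ ((Fintype.card ι : ℝ)⁻¹) :=
        (Real.pow_rpow_inv_natCast hx Fintype.card_ne_zero).symm
    _ ≤ _ := by gcongr

theorem norm_sum_mul_sq_le {α : Type*} (s : Finset α) (u v : α → ℂ) :
    ‖∑ i ∈ s, u i * v i‖ ^ 2 ≤ (∑ i ∈ s, ‖u i‖ ^ 2) * ∑ i ∈ s, ‖v i‖ ^ 2 := by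
  have htri : ‖∑ i ∈ s, u i * v i‖ ≤ ∑ i ∈ s, ‖u i‖ * ‖v i‖ :=
    (norm_sum_le _ _).trans_eq (by simp only [norm_mul])
  exact (pow_le_pow_left₀ (norm_nonneg _) htri 2).trans (sum_mul_sq_le_sq_mul_sq _ _ _)

theorem sum_piFinset_sum_update {ι α M : Type*} [Fintype ι] [DecidableEq ι]
    [NonAssocSemiring M] (H : ι → Finset α) (j : ι) (g : (ι → α) → M) :
    ∑ a ∈ Fintype.piFinset H, ∑ t ∈ H j, g (update a j t) =
      #(H j) * ∑ a ∈ Fintype.piFinset H, g a := by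
  have hmem : ∀ p ∈ Fintype.piFinset H ×ˢ H j,
      (update p.1 j p.2, p.1 j) ∈ Fintype.piFinset H ×ˢ H j := by
    rintro ⟨a, t⟩ hp
    simp only [mem_product, Fintype.mem_piFinset] at hp ⊢
    refine ⟨fun i => ?_, hp.1 j⟩
    rcases eq_or_ne i j with rfl | hij
    · simpa using hp.2
    · simpa [hij] using hp.1 i
  rw [← sum_product', ← nsmul_eq_mul, ← sum_const, sum_comm, ← sum_product']
  -- `(a, t) ↦ (update a j t, a j)` is an involution of `piFinset H ×ˢ H j`
  exact sum_nbij' (fun p => (update p.1 j p.2, p.1 j)) (fun p => (update p.1 j p.2, p.1 j))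
    hmem hmem (by simp) (by simp) (by simp)

section BoxSum

open ComplexConjugate

variable {G ι : Type*} [AddCommGroup G] [Fintype ι]

theorem conjIter_succ (n : ℕ) (z : ℂ) : conjIter (n + 1) z = conj (conjIter n z) :=
  iterate_succ_apply' _ n z

theorem conjIter_add_two (n : ℕ) (z : ℂ) : conjIter (n + 2) z = conjIter n z := by
  simp [conjIter_succ]

-- The summand of the box inner product, the point `x + ∑ ω_i (h_i - h_i') + ∑ h_i'` being
-- written as `x + ∑ (if ω_i then h_i else h_i')`.
def boxTerm (f : (ι → Bool) → G → ℂ) (x : G) (a b : ι → G) (ω : ι → Bool) : ℂ :=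
  conjIter #{i | ω i} (f ω (x + ∑ i, cond (ω i) (a i) (b i)))

variable [DecidableEq ι] (H : ι → Finset G) (f : (ι → Bool) → G → ℂ) (x : G) (a b : ι → G)
  {ω : ι → Bool} {j : ι}

theorem boxTerm_update_left_of_false (hω : ω j = false) (t : G) :
    boxTerm f x (update a j t) b ω = boxTerm f x a b ω := by
  unfold boxTerm
  congr 3
  refine sum_congr rfl fun i _ => ?_
  rcases eq_or_ne i j with rfl | hij <;> simp [*]

theorem boxTerm_update_right_of_true (hω : ω j = true) (t : G) :
    boxTerm f x a (update b j t) ω = boxTerm f x a b ω := by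
  unfold boxTerm
  congr 3
  refine sum_congr rfl fun i _ => ?_
  rcases eq_or_ne i j with rfl | hij <;> simp [*]

theorem boxTerm_comp_update {c : Bool} (hω : ω j = c) :
    boxTerm (fun ω => f (update ω j c)) x a b ω = boxTerm f x a b ω := by
  subst hω
  simp [boxTerm]

theorem card_filter_update_false_add_one (hω : ω j = true) :
    #{i | update ω j false i} + 1 = #{i | ω i} := by
  have hins : filter (fun i => ω i) univ =
      insert j (filter (fun i => update ω j false i) univ) := by
    ext i
    rcases eq_or_ne i j with rfl | hij <;> simp [*]
  rw [hins, card_insert_of_notMem (by simp)]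

theorem conj_boxTerm_update_left (hω : ω j = true) (t : G) :
    conj (boxTerm f x (update a j t) b ω) =
      boxTerm (fun ω => f (update ω j true)) x a (update b j t) (update ω j false) := by
  have hω' : update (update ω j false) j true = ω := by
    rw [update_idem, ← hω, update_eq_self]
  have hsum : ∑ i, cond (ω i) (update a j t i) (b i) =
      ∑ i, cond (update ω j false i) (a i) (update b j t i) := by
    refine sum_congr rfl fun i _ => ?_
    rcases eq_or_ne i j with rfl | hij <;> simp [*]
  rw [boxTerm, boxTerm, hω', hsum, ← conjIter_succ, ← card_filter_update_false_add_one hω,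
    conjIter_add_two]

-- Summing out `a j` (resp. `b j`) lets `boxSum` factor through the two halves without
-- splitting `piFinset H` along the coordinate `j`.
def trueHalf (j : ι) (x : G) (a b : ι → G) : ℂ :=
  ∑ t ∈ H j, ∏ ω ∈ univ.filter (fun ω : ι → Bool => ω j = true), boxTerm f x (update a j t) b ω

def falseHalf (j : ι) (x : G) (a b : ι → G) : ℂ :=
  ∑ t ∈ H j, ∏ ω ∈ univ.filter (fun ω : ι → Bool => ω j = false), boxTerm f x a (update b j t) ω

theorem trueHalf_mul_falseHalf (j : ι) :
    trueHalf H f j x a b * falseHalf H f j x a b =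
      ∑ t ∈ H j, ∑ t' ∈ H j, ∏ ω, boxTerm f x (update a j t) (update b j t') ω := by
  rw [trueHalf, falseHalf, sum_mul_sum]
  refine sum_congr rfl fun t _ => sum_congr rfl fun t' _ => ?_
  rw [← prod_filter_mul_prod_filter_not univ (fun ω : ι → Bool => ω j = true)]
  congr 1
  · exact prod_congr rfl fun ω hω =>
      (boxTerm_update_right_of_true f x _ b (mem_filter.1 hω).2 t').symm
  · refine prod_congr (by simp) fun ω hω => ?_
    exact (boxTerm_update_left_of_false f x a _ (by simpa using hω) t).symm

theorem conj_trueHalf (j : ι) :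
    conj (trueHalf H f j x a b) = falseHalf H (fun ω => f (update ω j true)) j x a b := by
  rw [trueHalf, falseHalf, map_sum]
  refine sum_congr rfl fun t _ => ?_
  rw [map_prod]
  refine prod_nbij' (fun ω => update ω j false) (fun ω => update ω j true)
    (by simp) (by simp) (fun ω hω => ?_) (fun ω hω => ?_) (fun ω hω => ?_)
  · have hωj : ω j = true := by simpa using hω
    rw [update_idem, ← hωj, update_eq_self]
  · have hωj : ω j = false := by simpa using hω
    rw [update_idem, ← hωj, update_eq_self]
  · exact conj_boxTerm_update_left f x a b (mem_filter.1 hω).2 t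

theorem trueHalf_comp_update_true (j : ι) :
    trueHalf H (fun ω => f (update ω j true)) j x a b = trueHalf H f j x a b :=
  sum_congr rfl fun _ _ => prod_congr rfl fun _ hω =>
    boxTerm_comp_update f x _ b (mem_filter.1 hω).2

theorem falseHalf_comp_update_false (j : ι) :
    falseHalf H (fun ω => f (update ω j false)) j x a b = falseHalf H f j x a b :=
  sum_congr rfl fun _ _ => prod_congr rfl fun _ hω =>
    boxTerm_comp_update f x a _ (mem_filter.1 hω).2

theorem conj_falseHalf (j : ι) :
    conj (falseHalf H f j x a b) = trueHalf H (fun ω => f (update ω j false)) j x a b := by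
  have h : falseHalf H f j x a b =
      conj (trueHalf H (fun ω => f (update ω j false)) j x a b) := by
    simp only [conj_trueHalf, update_idem, falseHalf_comp_update_false]
  rw [h, Complex.conj_conj]

variable [Fintype G]

def boxSum : ℂ :=
  ∑ x, ∑ a ∈ Fintype.piFinset H, ∑ b ∈ Fintype.piFinset H, ∏ ω, boxTerm f x a b ω

theorem card_sq_mul_boxSum (j : ι) :
    (#(H j) : ℂ) ^ 2 * boxSum H f = ∑ x, ∑ a ∈ Fintype.piFinset H, ∑ b ∈ Fintype.piFinset H,
      trueHalf H f j x a b * falseHalf H f j x a b := by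
  rw [boxSum, mul_sum]
  refine sum_congr rfl fun x _ => ?_
  simp_rw [trueHalf_mul_falseHalf]
  symm
  calc ∑ a ∈ Fintype.piFinset H, ∑ b ∈ Fintype.piFinset H, ∑ t ∈ H j, ∑ t' ∈ H j,
        ∏ ω, boxTerm f x (update a j t) (update b j t') ω
      = ∑ a ∈ Fintype.piFinset H, ∑ t ∈ H j, ∑ b ∈ Fintype.piFinset H, ∑ t' ∈ H j,
          ∏ ω, boxTerm f x (update a j t) (update b j t') ω :=
        sum_congr rfl fun a _ => sum_comm
    _ = ∑ a ∈ Fintype.piFinset H, ∑ t ∈ H j,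
          #(H j) * ∑ b ∈ Fintype.piFinset H, ∏ ω, boxTerm f x (update a j t) b ω :=
        sum_congr rfl fun a _ => sum_congr rfl fun t _ =>
          sum_piFinset_sum_update H j fun b => ∏ ω, boxTerm f x (update a j t) b ω
    _ = #(H j) * ∑ a ∈ Fintype.piFinset H,
          #(H j) * ∑ b ∈ Fintype.piFinset H, ∏ ω, boxTerm f x a b ω :=
        sum_piFinset_sum_update H j fun a =>
          #(H j) * ∑ b ∈ Fintype.piFinset H, ∏ ω, boxTerm f x a b ω
    _ = _ := by rw [← mul_sum, ← mul_assoc, sq]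

theorem card_sq_mul_boxSum_comp_update_true (j : ι) :
    (#(H j) : ℂ) ^ 2 * boxSum H (fun ω => f (update ω j true)) =
      ((∑ x, ∑ a ∈ Fintype.piFinset H, ∑ b ∈ Fintype.piFinset H,
        ‖trueHalf H f j x a b‖ ^ 2 : ℝ) : ℂ) := by
  rw [card_sq_mul_boxSum]
  push_cast
  refine sum_congr rfl fun x _ => sum_congr rfl fun a _ => sum_congr rfl fun b _ => ?_
  rw [← Complex.mul_conj', conj_trueHalf, trueHalf_comp_update_true]

theorem card_sq_mul_boxSum_comp_update_false (j : ι) :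
    (#(H j) : ℂ) ^ 2 * boxSum H (fun ω => f (update ω j false)) =
      ((∑ x, ∑ a ∈ Fintype.piFinset H, ∑ b ∈ Fintype.piFinset H,
        ‖falseHalf H f j x a b‖ ^ 2 : ℝ) : ℂ) := by
  rw [card_sq_mul_boxSum]
  push_cast
  refine sum_congr rfl fun x _ => sum_congr rfl fun a _ => sum_congr rfl fun b _ => ?_
  rw [← Complex.mul_conj', conj_falseHalf, falseHalf_comp_update_false, mul_comm]

theorem boxSum_eq_zero_of_eq_empty (h : H j = ∅) : boxSum H f = 0 := by
  simp [boxSum, Fintype.piFinset_eq_empty.2 ⟨j, h⟩]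

theorem norm_boxSum_sq_le (j : ι) :
    ‖boxSum H f‖ ^ 2 ≤
      ‖boxSum H (fun ω => f (update ω j true))‖ * ‖boxSum H (fun ω => f (update ω j false))‖ := by
  rcases (H j).eq_empty_or_nonempty with h | h
  · rw [boxSum_eq_zero_of_eq_empty H f h, norm_zero, sq, zero_mul]
    positivity
  have htrue : (#(H j) : ℝ) ^ 2 * ‖boxSum H (fun ω => f (update ω j true))‖ =
      ∑ x, ∑ a ∈ Fintype.piFinset H, ∑ b ∈ Fintype.piFinset H, ‖trueHalf H f j x a b‖ ^ 2 := by
    have := congrArg norm (card_sq_mul_boxSum_comp_update_true H f j)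
    rw [norm_mul, norm_pow, Complex.norm_natCast, Complex.norm_of_nonneg] at this
    exacts [this, sum_nonneg fun _ _ => sum_nonneg fun _ _ => sum_nonneg fun _ _ => sq_nonneg _]
  have hfalse : (#(H j) : ℝ) ^ 2 * ‖boxSum H (fun ω => f (update ω j false))‖ =
      ∑ x, ∑ a ∈ Fintype.piFinset H, ∑ b ∈ Fintype.piFinset H, ‖falseHalf H f j x a b‖ ^ 2 := by
    have := congrArg norm (card_sq_mul_boxSum_comp_update_false H f j)
    rw [norm_mul, norm_pow, Complex.norm_natCast, Complex.norm_of_nonneg] at this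
    exacts [this, sum_nonneg fun _ _ => sum_nonneg fun _ _ => sum_nonneg fun _ _ => sq_nonneg _]
  have hcs := norm_sum_mul_sq_le (univ ×ˢ Fintype.piFinset H ×ˢ Fintype.piFinset H)
    (fun p => trueHalf H f j p.1 p.2.1 p.2.2) (fun p => falseHalf H f j p.1 p.2.1 p.2.2)
  simp only [sum_product] at hcs
  rw [← card_sq_mul_boxSum, ← htrue, ← hfalse, norm_mul, norm_pow, Complex.norm_natCast] at hcs
  have hc : 0 < (#(H j) : ℝ) ^ 4 := by
    have := h.card_pos
    positivity
  refine le_of_mul_le_mul_left ?_ hc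
  linear_combination hcs

open scoped ComplexOrder in
theorem boxSum_const_nonneg [Nonempty ι] (g : G → ℂ) : 0 ≤ boxSum H (fun _ => g) := by
  obtain ⟨j⟩ := ‹Nonempty ι›
  rcases (H j).eq_empty_or_nonempty with h | h
  · rw [boxSum_eq_zero_of_eq_empty H _ h]
  have hc : (#(H j) : ℂ) ^ 2 ≠ 0 := by simp [h.ne_empty]
  have hsq := card_sq_mul_boxSum_comp_update_true H (fun _ => g) j
  rw [← mul_div_cancel_left₀ (boxSum H _) hc, hsq]
  have hr : 0 ≤ ∑ x, ∑ a ∈ Fintype.piFinset H, ∑ b ∈ Fintype.piFinset H,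
      ‖trueHalf H (fun _ => g) j x a b‖ ^ 2 :=
    sum_nonneg fun _ _ => sum_nonneg fun _ _ => sum_nonneg fun _ _ => sq_nonneg _
  exact_mod_cast Complex.zero_le_real.2 (div_nonneg hr (sq_nonneg (#(H j) : ℝ)))

end BoxSum

section BoxNorm

open ComplexConjugate

variable {G : Type*} [AddCommGroup G]

theorem boxDeriv_ofFn {n : ℕ} (a b : Fin n → G) (g : G → ℂ) (x : G) :
    boxDeriv (List.ofFn fun i => (a i, b i)) g x = ∏ ω, boxTerm (fun _ => g) x b a ω := by
  -- `b` comes first because `Δ_{(h,h')}` conjugates the `h'`-shift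
  induction n generalizing x with
  | zero => simp [boxDeriv, boxTerm, conjIter]
  | succ n ih =>
    have htrue : ∀ ω : Fin n → Bool, boxTerm (fun _ => g) x b a (Fin.cons true ω) =
        conj (boxTerm (fun _ => g) (x + b 0) (fun i => b i.succ) (fun i => a i.succ) ω) := by
      simp [boxTerm, Fin.card_filter_univ_succ, Fin.sum_univ_succ, conjIter_succ, add_assoc]
    have hfalse : ∀ ω : Fin n → Bool, boxTerm (fun _ => g) x b a (Fin.cons false ω) =
        boxTerm (fun _ => g) (x + a 0) (fun i => b i.succ) (fun i => a i.succ) ω := by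
      simp [boxTerm, Fin.card_filter_univ_succ, Fin.sum_univ_succ, add_assoc]
    rw [List.ofFn_succ, ← Fintype.prod_equiv (Fin.consEquiv fun _ => Bool)
      (fun p => boxTerm (fun _ => g) x b a (Fin.cons p.1 p.2)) _ fun _ => rfl,
      Fintype.prod_prod_type, Fintype.prod_bool]
    simp only [boxDeriv, ih, htrue, hfalse, map_prod]

variable [Fintype G] {ℓ : ℕ} (H : Fin ℓ → Finset G)

theorem gowersBoxInner_eq_boxSum (f : (Fin ℓ → Bool) → G → ℂ) :
    gowersBoxInner H f =
      boxSum H f / ((Fintype.card G : ℂ) * ((Fintype.piFinset H).card : ℂ) ^ 2) := by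
  rw [gowersBoxInner, boxSum]
  congr 1
  refine sum_congr rfl fun x _ => sum_congr rfl fun a _ => sum_congr rfl fun b _ =>
    prod_congr rfl fun ω _ => ?_
  rw [boxTerm, add_assoc, ← sum_add_distrib]
  congr 3
  refine sum_congr rfl fun i _ => ?_
  cases ω i <;> simp

theorem boxAvg_eq_gowersBoxInner (g : G → ℂ) :
    boxAvg H g = gowersBoxInner H (fun _ => g) := by
  rw [gowersBoxInner_eq_boxSum, boxAvg, boxSum, sum_congr rfl fun x _ => sum_comm]
  simp only [boxDeriv_ofFn]

theorem norm_gowersBoxInner_sq_le (f : (Fin ℓ → Bool) → G → ℂ) (j : Fin ℓ) :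
    ‖gowersBoxInner H f‖ ^ 2 ≤ ‖gowersBoxInner H (fun ω => f (update ω j true))‖ *
      ‖gowersBoxInner H (fun ω => f (update ω j false))‖ := by
  simp only [gowersBoxInner_eq_boxSum, norm_div]
  rw [div_pow, div_mul_div_comm, ← sq]
  exact div_le_div_of_nonneg_right (norm_boxSum_sq_le H f j) (sq_nonneg _)

open scoped ComplexOrder in
theorem boxAvg_nonneg (hℓ : 1 ≤ ℓ) (g : G → ℂ) : 0 ≤ boxAvg H g := by
  have : Nonempty (Fin ℓ) := ⟨⟨0, hℓ⟩⟩
  rw [boxAvg_eq_gowersBoxInner, gowersBoxInner_eq_boxSum]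
  exact div_nonneg (boxSum_const_nonneg H g) (by positivity)

end BoxNorm

theorem gowers_cauchy_schwarz_box_general {G : Type*} [AddCommGroup G] [Fintype G]
    {ℓ : ℕ} (hℓ : 1 ≤ ℓ) (H : Fin ℓ → Finset G)
    (f : (Fin ℓ → Bool) → G → ℂ) :
    ‖gowersBoxInner H f‖ ≤ ∏ ω : Fin ℓ → Bool, boxNorm H (f ω) := by
  have hcs := pow_card_le_prod_of_sq_le_mul_update (fun f => ‖gowersBoxInner H f‖)
    (fun _ => norm_nonneg _) (norm_gowersBoxInner_sq_le H) f
  have hnorm : ∀ ω, boxNorm H (f ω) =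
      ‖gowersBoxInner H fun _ => f ω‖ ^ ((Fintype.card (Fin ℓ → Bool) : ℝ)⁻¹) := by
    intro ω
    rw [boxNorm, Complex.re_eq_norm.2 (boxAvg_nonneg H hℓ (f ω)), boxAvg_eq_gowersBoxInner]
    simp
  simp only [hnorm]
  exact le_prod_rpow_inv_card_of_pow_card_le (norm_nonneg _) (fun _ => norm_nonneg _)
    (by simpa using hcs)

/-- Cauchy–Schwarz–Gowers inequality for box norms: the absolute value of the Gowers box
inner product of a family `(f_ω)_{ω ∈ {0,1}^ℓ}` is at most the product of the box norms
of the `f_ω`. -/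
theorem gowers_cauchy_schwarz_box {G : Type*} [AddCommGroup G] [Fintype G]
    {ℓ : ℕ} (hℓ : 1 ≤ ℓ) (H : Fin ℓ → Finset G) (hH : ∀ i, (H i).Nonempty)
    (f : (Fin ℓ → Bool) → G → ℂ) :
    ‖gowersBoxInner H f‖ ≤ ∏ ω : Fin ℓ → Bool, boxNorm H (f ω) :=
  gowers_cauchy_schwarz_box_general hℓ H f
end

section
/- Pair-of-pairs double counting for dense families of additive quadruples (proved in Step 4 of Lemma 6.2 of the paper): Let D', N be positive integers, let δ ∈ (0,1], and let 𝒮 be a set of quadruples (h₁,h₂,h₃,h₄) ∈ ([N]^{D'})⁴ satisfying h₁ + h₂ = h₃ + h₄, with |𝒮| ≥ δ·N^{3D'}. Then there exist h₂, h₃, h₂', h₃' ∈ [N]^{D'} such that the set { h₁ ∈ [N]^{D'} : (h₁, h₂, h₃, h₁+h₂−h₃) ∈ 𝒮 and (h₁, h₂', h₃', h₁+h₂'−h₃') ∈ 𝒮 } has cardinality at least (δ³/8)·N^{D'}. -/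
open scoped BigOperators

/-- The discrete box `[N]^{D'} = {0, 1, …, N−1}^{D'} ⊆ ℤ^{D'}`. -/
noncomputable def intCube (N D' : ℕ) : Finset (Fin D' → ℤ) :=
  Fintype.piFinset fun _ => Finset.Ico (0 : ℤ) (N : ℤ)

/-!
Each quadruple of `𝒮` is determined by its first three entries, so there are at least
`δ N^{3D'}` incidences between points `h₁` and pairs `(h₂, h₃)` completing `h₁` to a quadruple
of `𝒮`. By Cauchy–Schwarz over `h₁`, the number of triples `(h₁, p, p')` in which `h₁` is incident
to both pairs `p` and `p'` is at least `δ² N^{5D'}`, and averaging over the `N^{4D'}` pairs of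
pairs yields one with at least `δ² N^{D'} ≥ (δ³/8) N^{D'}` common points `h₁`.
-/

open Finset

section DoubleCounting

variable {α β : Type*} (A : Finset α) (P : Finset β) (R : α → β → Prop) [DecidableRel R]

theorem sum_card_filter_eq_card_filter_product :
    ∑ a ∈ A, #{p ∈ P | R a p} = #{x ∈ A ×ˢ P | R x.1 x.2} := by
  simp only [card_filter, sum_product]

theorem sum_sq_card_filter_eq_sum_sum_card_filter_and :
    ∑ a ∈ A, #{p ∈ P | R a p} ^ 2 = ∑ p ∈ P, ∑ p' ∈ P, #{a ∈ A | R a p ∧ R a p'} := by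
  simp only [card_filter, sq, sum_mul_sum, ite_zero_mul_ite_zero, one_mul]
  rw [sum_comm]
  exact sum_congr rfl fun p _ => sum_comm

theorem exists_sq_card_filter_product_le (hP : P.Nonempty) :
    ∃ p ∈ P, ∃ p' ∈ P,
      #{x ∈ A ×ˢ P | R x.1 x.2} ^ 2 ≤ #A * #P ^ 2 * #{a ∈ A | R a p ∧ R a p'} := by
  obtain ⟨q, hq, hmax⟩ := (P ×ˢ P).exists_max_image
    (fun q => #{a ∈ A | R a q.1 ∧ R a q.2}) (hP.product hP)
  refine ⟨q.1, (mem_product.mp hq).1, q.2, (mem_product.mp hq).2, ?_⟩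
  calc #{x ∈ A ×ˢ P | R x.1 x.2} ^ 2
      = (∑ a ∈ A, #{p ∈ P | R a p}) ^ 2 := by
        rw [sum_card_filter_eq_card_filter_product]
    _ ≤ #A * ∑ a ∈ A, #{p ∈ P | R a p} ^ 2 := sq_sum_le_card_mul_sum_sq
    _ = #A * ∑ q ∈ P ×ˢ P, #{a ∈ A | R a q.1 ∧ R a q.2} := by
        rw [sum_sq_card_filter_eq_sum_sum_card_filter_and, sum_product]
    _ ≤ #A * (#(P ×ˢ P) * #{a ∈ A | R a q.1 ∧ R a q.2}) := by
        gcongr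
        exact sum_le_card_nsmul _ _ _ hmax
    _ = #A * #P ^ 2 * #{a ∈ A | R a q.1 ∧ R a q.2} := by
        rw [card_product]; ring

end DoubleCounting

theorem card_le_card_filter_additive_completion {G : Type*} [AddCommGroup G] [DecidableEq G]
    (B : Finset G) (S : Finset (G × G × G × G))
    (hSB : ∀ q ∈ S, q.1 ∈ B ∧ q.2.1 ∈ B ∧ q.2.2.1 ∈ B)
    (hSadd : ∀ q ∈ S, q.1 + q.2.1 = q.2.2.1 + q.2.2.2) :
    #S ≤ #{x ∈ B ×ˢ (B ×ˢ B) | (x.1, x.2.1, x.2.2, x.1 + x.2.1 - x.2.2) ∈ S} := by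
  have hlast : ∀ q ∈ S, q.1 + q.2.1 - q.2.2.1 = q.2.2.2 := fun q hq => by
    rw [hSadd q hq]; abel
  refine card_le_card_of_injOn (fun q => (q.1, q.2.1, q.2.2.1)) (fun q hq => ?_) ?_
  · obtain ⟨h₁, h₂, h₃⟩ := hSB q hq
    simp only [coe_filter, Set.mem_ofPred_eq, mem_product]
    exact ⟨⟨h₁, h₂, h₃⟩, by rwa [hlast q hq]⟩
  · intro q hq q' hq' hqq'
    simp only [Prod.mk.injEq] at hqq'
    obtain ⟨h₁, h₂, h₃⟩ := hqq'
    refine Prod.ext h₁ (Prod.ext h₂ (Prod.ext h₃ ?_))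
    rw [← hlast q hq, ← hlast q' hq', h₁, h₂, h₃]

theorem cube_div_eight_mul_le_of_sq_le {δ M X g : ℝ} (hδ0 : 0 ≤ δ) (hδ1 : δ ≤ 1) (hM : 0 < M)
    (hX : δ * M ^ 3 ≤ X) (hXg : X ^ 2 ≤ M * (M * M) ^ 2 * g) : δ ^ 3 / 8 * M ≤ g := by
  have hδM : δ ^ 2 * M ^ 6 ≤ M ^ 5 * g :=
    calc δ ^ 2 * M ^ 6 = (δ * M ^ 3) ^ 2 := by ring
      _ ≤ X ^ 2 := pow_le_pow_left₀ (by positivity) hX 2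
      _ ≤ M ^ 5 * g := by linarith [show M * (M * M) ^ 2 * g = M ^ 5 * g by ring]
  have hg : δ ^ 2 * M ≤ g := le_of_mul_le_mul_left (by linarith) (pow_pos hM 5)
  calc δ ^ 3 / 8 * M ≤ δ ^ 2 * M := by
        gcongr
        nlinarith [pow_le_pow_of_le_one hδ0 hδ1 (by norm_num : 2 ≤ 3)]
    _ ≤ g := hg

theorem card_intCube (N D' : ℕ) : #(intCube N D') = N ^ D' := by
  simp [intCube]

theorem intCube_nonempty {N : ℕ} (hN : 0 < N) (D' : ℕ) : (intCube N D').Nonempty :=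
  ⟨0, Fintype.mem_piFinset.mpr fun _ => mem_Ico.mpr ⟨le_rfl, Int.natCast_pos.mpr hN⟩⟩

open scoped Classical in
theorem pair_of_pairs_double_counting_general
    (D' N : ℕ) (hN : 0 < N) (δ : ℝ) (hδ0 : 0 < δ) (hδ1 : δ ≤ 1)
    (𝒮 : Finset ((Fin D' → ℤ) × (Fin D' → ℤ) × (Fin D' → ℤ) × (Fin D' → ℤ)))
    (h𝒮cube : ∀ q ∈ 𝒮, q.1 ∈ intCube N D' ∧ q.2.1 ∈ intCube N D' ∧
      q.2.2.1 ∈ intCube N D' ∧ q.2.2.2 ∈ intCube N D')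
    (h𝒮add : ∀ q ∈ 𝒮, q.1 + q.2.1 = q.2.2.1 + q.2.2.2)
    (h𝒮card : δ * (N : ℝ) ^ (3 * D') ≤ (𝒮.card : ℝ)) :
    ∃ h₂ h₃ h₂' h₃' : Fin D' → ℤ,
      h₂ ∈ intCube N D' ∧ h₃ ∈ intCube N D' ∧ h₂' ∈ intCube N D' ∧ h₃' ∈ intCube N D' ∧
      δ ^ 3 / 8 * (N : ℝ) ^ D' ≤
        (((intCube N D').filter fun h₁ =>
            (h₁, h₂, h₃, h₁ + h₂ - h₃) ∈ 𝒮 ∧ (h₁, h₂', h₃', h₁ + h₂' - h₃') ∈ 𝒮).card : ℝ) := by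
  set B := intCube N D'
  have hB := intCube_nonempty hN D'
  obtain ⟨⟨h₂, h₃⟩, hp, ⟨h₂', h₃'⟩, hp', hpair⟩ := exists_sq_card_filter_product_le B (B ×ˢ B)
    (fun h₁ p => (h₁, p.1, p.2, h₁ + p.1 - p.2) ∈ 𝒮) (hB.product hB)
  rw [mem_product] at hp hp'
  refine ⟨h₂, h₃, h₂', h₃', hp.1, hp.2, hp'.1, hp'.2, ?_⟩
  have hM : (0 : ℝ) < (N : ℝ) ^ D' := by positivity
  have hcount : δ * ((N : ℝ) ^ D') ^ 3 ≤
      #{x ∈ B ×ˢ (B ×ˢ B) | (x.1, x.2.1, x.2.2, x.1 + x.2.1 - x.2.2) ∈ 𝒮} :=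
    calc δ * ((N : ℝ) ^ D') ^ 3 = δ * (N : ℝ) ^ (3 * D') := by rw [← pow_mul, mul_comm D']
      _ ≤ #𝒮 := h𝒮card
      _ ≤ _ := by
        norm_cast
        convert card_le_card_filter_additive_completion B 𝒮
          (fun q hq => (h𝒮cube q hq).imp_right (·.imp_right (·.1))) h𝒮add
  have hpairℝ := (Nat.cast_le (α := ℝ)).mpr hpair
  push_cast [card_product, show #B = N ^ D' from card_intCube N D'] at hpairℝ
  exact cube_div_eight_mul_le_of_sq_le hδ0.le hδ1 hM hcount hpairℝ

open scoped Classical in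
/-- Pair-of-pairs double counting for dense families of additive quadruples: if `𝒮` is a
family of additive quadruples in `([N]^{D'})⁴` of size at least `δ N^{3D'}`, then there
are pairs `(h₂, h₃)` and `(h₂', h₃')` such that at least `(δ³/8) N^{D'}` elements
`h₁ ∈ [N]^{D'}` extend both pairs to quadruples of `𝒮`. -/
theorem pair_of_pairs_double_counting
    (D' N : ℕ) (hD' : 0 < D') (hN : 0 < N) (δ : ℝ) (hδ0 : 0 < δ) (hδ1 : δ ≤ 1)
    (𝒮 : Finset ((Fin D' → ℤ) × (Fin D' → ℤ) × (Fin D' → ℤ) × (Fin D' → ℤ)))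
    (h𝒮cube : ∀ q ∈ 𝒮, q.1 ∈ intCube N D' ∧ q.2.1 ∈ intCube N D' ∧
      q.2.2.1 ∈ intCube N D' ∧ q.2.2.2 ∈ intCube N D')
    (h𝒮add : ∀ q ∈ 𝒮, q.1 + q.2.1 = q.2.2.1 + q.2.2.2)
    (h𝒮card : δ * (N : ℝ) ^ (3 * D') ≤ (𝒮.card : ℝ)) :
    ∃ h₂ h₃ h₂' h₃' : Fin D' → ℤ,
      h₂ ∈ intCube N D' ∧ h₃ ∈ intCube N D' ∧ h₂' ∈ intCube N D' ∧ h₃' ∈ intCube N D' ∧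
      δ ^ 3 / 8 * (N : ℝ) ^ D' ≤
        (((intCube N D').filter fun h₁ =>
            (h₁, h₂, h₃, h₁ + h₂ - h₃) ∈ 𝒮 ∧ (h₁, h₂', h₃', h₁ + h₂' - h₃') ∈ 𝒮).card : ℝ) :=
  pair_of_pairs_double_counting_general D' N hN δ hδ0 hδ1 𝒮 h𝒮cube h𝒮add h𝒮card
end
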